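/- arXiv:1802.02512 — 2 statements merged into one kernel-verified Lean document; each statement's English description precedes it below -/
import Mathlib

section
/- Let k̄ be continuous. For every pair (c,w) ∈ W^{1,1}((0,T); ℝ^𝒴_+ × ℝ^ℛ_+) with ẇ(t) ≥ 0 for a.e. t, one has sup over ζ ∈ C^1_c((0,T); ℝ^ℛ) of G(c,w,ζ) equals ∫_0^T Σ_{r∈ℛ} s(ẇ^r(t) | k̄^r(c(t))) dt, where both sides take values in [0,∞] and may equal +∞ simultaneously. -/
/-!
Pointwise, `s(j|k) = sup_ζ (ζ j - k (exp ζ - 1))`, so `G(c,w,ζ)` never exceeds the entropy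
integral. Conversely, the clamped maximisers `ζₙ = max (-n) (min n (log (ẇ / k̄(c))))` are bounded,
measurable, and make the integrand nonnegative and convergent to `s(ẇ|k̄(c))`; by Fatou the entropy
integral is therefore at most the supremum of `G` over bounded measurable `ζ`. Each such `ζ` is the
bounded a.e. limit on `(0,T)` of test functions (mollify, then cut off near the endpoints), and
since `ẇ` is integrable and `k̄(c)` is bounded, dominated convergence carries `G` to the limit.
-/

open MeasureTheory Real Set

/-- The Boltzmann entropy function `s(j|k)`, valued in `[0,∞]`. -/
noncomputable def bes (j k : ℝ) : ENNReal :=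
  if j = 0 then ENNReal.ofReal k
  else if k = 0 then ⊤
  else ENNReal.ofReal (j * Real.log (j / k) - j + k)

open Filter Topology
open scoped ContDiff Convolution

/-- `s(j|k) = sup_ζ legendreTerm j k ζ`: the entropy `s(·|k)` is the Legendre transform of
`ζ ↦ k (exp ζ - 1)`. -/
noncomputable def legendreTerm (j k ζ : ℝ) : ℝ := ζ * j - k * (Real.exp ζ - 1)

/-- `legendreSum (ẇ t) (k̄ (c t)) (ζ t)` is the integrand `ζ·ẇ - H(c,ζ)` of `G`. -/
noncomputable def legendreSum {ℛ : Type*} [Fintype ℛ] (j k ζ : ℛ → ℝ) : ℝ :=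
  ∑ r, legendreTerm (j r) (k r) (ζ r)

/-- A bounded near-maximiser of `legendreTerm j k`; at `j = 0` and `k = 0` it takes the limiting
values of the clamped `log (j / k)`. -/
noncomputable def truncLogRatio (n : ℕ) (j k : ℝ) : ℝ :=
  if j = 0 then -n else if k = 0 then n else max (-n) (min n (Real.log (j / k)))

section Scalar

variable {j k ζ : ℝ}

theorem legendreTerm_le_of_pos (hj : 0 < j) (hk : 0 < k) :
    legendreTerm j k ζ ≤ j * Real.log (j / k) - j + k := by
  set L := Real.log (j / k)
  have hexpL : k * Real.exp L = j := by
    rw [Real.exp_log (div_pos hj hk)]; field_simp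
  -- `k e^ζ = j e^(ζ - L) ≥ j (1 + ζ - L)`
  have hsplit : k * Real.exp ζ = j * Real.exp (ζ - L) := by
    rw [← hexpL, Real.exp_sub]; field_simp
  have := mul_le_mul_of_nonneg_left (Real.add_one_le_exp (ζ - L)) hj.le
  unfold legendreTerm
  nlinarith

theorem ofReal_legendreTerm_le_bes (hj : 0 ≤ j) (hk : 0 ≤ k) :
    ENNReal.ofReal (legendreTerm j k ζ) ≤ bes j k := by
  unfold bes
  split_ifs with hj0 hk0
  · subst hj0
    refine ENNReal.ofReal_le_ofReal ?_
    simp only [legendreTerm]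
    nlinarith [Real.exp_pos ζ]
  · exact le_top
  · exact ENNReal.ofReal_le_ofReal
      (legendreTerm_le_of_pos (hj.lt_of_ne' hj0) (hk.lt_of_ne' hk0))

/-- The hypothesis says that `ζ` lies between `0` and the maximiser `log (j / k)`. -/
theorem legendreTerm_nonneg (hk : 0 ≤ k) (h : 0 ≤ ζ * (j - k * Real.exp ζ)) :
    0 ≤ legendreTerm j k ζ := by
  have h1 : (1 - ζ) * Real.exp ζ ≤ 1 := by
    have := mul_le_mul_of_nonneg_right (Real.add_one_le_exp (-ζ)) (Real.exp_pos ζ).le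
    rwa [← Real.exp_add, neg_add_cancel, Real.exp_zero, neg_add_eq_sub] at this
  have h2 := mul_le_mul_of_nonneg_left h1 hk
  unfold legendreTerm
  nlinarith

theorem abs_truncLogRatio_le (n : ℕ) (j k : ℝ) : |truncLogRatio n j k| ≤ n := by
  unfold truncLogRatio
  split_ifs
  · simp
  · simp
  · exact abs_le.2 ⟨le_max_left _ _, max_le (by simp) (min_le_left _ _)⟩

theorem legendreTerm_truncLogRatio_nonneg (n : ℕ) (hj : 0 ≤ j) (hk : 0 ≤ k) :
    0 ≤ legendreTerm j k (truncLogRatio n j k) := by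
  refine legendreTerm_nonneg hk ?_
  unfold truncLogRatio
  split_ifs with hj0 hk0
  · subst hj0; rw [zero_sub, neg_mul_neg]; positivity
  · subst hk0; simp only [zero_mul, sub_zero]; positivity
  · -- the clamped value lies between `0` and `log (j / k)`
    have hexp : k * Real.exp (Real.log (j / k)) = j := by
      rw [Real.exp_log (div_pos (hj.lt_of_ne' hj0) (hk.lt_of_ne' hk0))]; field_simp
    set L := Real.log (j / k)
    set z := max (-(n : ℝ)) (min n L)
    have hn : (0 : ℝ) ≤ n := Nat.cast_nonneg n
    rw [← hexp, ← mul_sub]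
    rcases le_total 0 L with hL | hL
    · have hz0 : 0 ≤ z := le_max_of_le_right (le_min hn hL)
      have hzL : z ≤ L := max_le (by linarith) (min_le_right _ _)
      have := Real.exp_le_exp.2 hzL
      exact mul_nonneg hz0 (mul_nonneg hk (by linarith))
    · have hz0 : z ≤ 0 := max_le (by linarith) (min_le_of_right_le hL)
      have hzL : L ≤ z := le_max_of_le_right (le_min (by linarith) le_rfl)
      have := Real.exp_le_exp.2 hzL
      exact mul_nonneg_of_nonpos_of_nonpos hz0 (mul_nonpos_of_nonneg_of_nonpos hk (by linarith))

theorem tendsto_ofReal_legendreTerm_truncLogRatio (hj : 0 ≤ j) (hk : 0 ≤ k) :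
    Tendsto (fun n : ℕ => ENNReal.ofReal (legendreTerm j k (truncLogRatio n j k))) atTop
      (𝓝 (bes j k)) := by
  have hn : Tendsto (fun n : ℕ => (n : ℝ)) atTop atTop := tendsto_natCast_atTop_atTop
  rcases hj.eq_or_lt' with rfl | hj'
  · have hlim : Tendsto (fun n : ℕ => k - k * Real.exp (-(n : ℝ))) atTop (𝓝 k) := by
      simpa using tendsto_const_nhds.sub
        ((Real.tendsto_exp_atBot.comp (tendsto_neg_atTop_atBot.comp hn)).const_mul k)
    simp only [bes, truncLogRatio, if_true]
    refine (ENNReal.tendsto_ofReal hlim).congr fun n => ?_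
    simp only [legendreTerm]; ring_nf
  rcases hk.eq_or_lt' with rfl | hk'
  · simp only [bes, truncLogRatio, hj'.ne', if_false, if_true]
    refine (ENNReal.tendsto_ofReal_atTop.comp (hn.atTop_mul_const hj')).congr fun n => ?_
    simp [legendreTerm]
  · -- eventually the clamp is inactive and the term equals `s(j|k)`
    refine tendsto_const_nhds.congr' ?_
    filter_upwards [hn.eventually_ge_atTop |Real.log (j / k)|] with n hn
    have hz : truncLogRatio n j k = Real.log (j / k) := by
      simp only [truncLogRatio, hj'.ne', hk'.ne', if_false]
      rw [min_eq_right (abs_le.1 hn).2, max_eq_right (abs_le.1 hn).1]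
    have hexp : k * Real.exp (Real.log (j / k)) = j := by
      rw [Real.exp_log (div_pos hj' hk')]; field_simp
    simp only [bes, hj'.ne', hk'.ne', if_false, hz, legendreTerm]
    congr 1
    linarith

theorem abs_legendreTerm_le {B C : ℝ} (hζ : |ζ| ≤ B) (hk : |k| ≤ C) :
    |legendreTerm j k ζ| ≤ B * |j| + C * (Real.exp B + 1) := by
  have hexp : |Real.exp ζ - 1| ≤ Real.exp B + 1 := by
    have := Real.exp_le_exp.2 ((le_abs_self ζ).trans hζ)
    rw [abs_le]; constructor <;> nlinarith [Real.exp_pos ζ]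
  calc |legendreTerm j k ζ| ≤ |ζ| * |j| + |k| * |Real.exp ζ - 1| := by
        unfold legendreTerm; rw [← abs_mul, ← abs_mul]; exact abs_sub _ _
    _ ≤ B * |j| + C * (Real.exp B + 1) := by
        gcongr
        exact (abs_nonneg k).trans hk

end Scalar

section Vector

variable {ℛ : Type*} [Fintype ℛ]

theorem continuous_legendreSum :
    Continuous fun p : (ℛ → ℝ) × (ℛ → ℝ) × (ℛ → ℝ) => legendreSum p.1 p.2.1 p.2.2 := by
  unfold legendreSum legendreTerm
  fun_prop

theorem abs_legendreSum_le {j k ζ : ℛ → ℝ} {B C : ℝ} (hζ : ‖ζ‖ ≤ B) (hk : ‖k‖ ≤ C) :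
    |legendreSum j k ζ| ≤ Fintype.card ℛ * (B * ‖j‖ + C * (Real.exp B + 1)) := by
  calc |legendreSum j k ζ| ≤ ∑ r, |legendreTerm (j r) (k r) (ζ r)| := Finset.abs_sum_le_sum_abs _ _
    _ ≤ ∑ _r : ℛ, (B * ‖j‖ + C * (Real.exp B + 1)) := by
        refine Finset.sum_le_sum fun r _ => (abs_legendreTerm_le
          ((norm_le_pi_norm ζ r).trans hζ) ((norm_le_pi_norm k r).trans hk)).trans ?_
        have hB : 0 ≤ B := (norm_nonneg _).trans hζ
        gcongr
        exact norm_le_pi_norm j r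
    _ = Fintype.card ℛ * (B * ‖j‖ + C * (Real.exp B + 1)) := by
        rw [Finset.sum_const, Finset.card_univ, nsmul_eq_mul]

theorem ofReal_legendreSum_le_sum_bes {j k : ℛ → ℝ} (hj : ∀ r, 0 ≤ j r) (hk : ∀ r, 0 ≤ k r)
    (ζ : ℛ → ℝ) : ENNReal.ofReal (legendreSum j k ζ) ≤ ∑ r, bes (j r) (k r) :=
  (Finset.le_sum_of_subadditive _ ENNReal.ofReal_zero.le (fun _ _ => ENNReal.ofReal_add_le)
    _ _).trans
    (Finset.sum_le_sum fun r _ => ofReal_legendreTerm_le_bes (hj r) (hk r))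

theorem tendsto_ofReal_legendreSum_truncLogRatio {j k : ℛ → ℝ} (hj : ∀ r, 0 ≤ j r)
    (hk : ∀ r, 0 ≤ k r) :
    Tendsto (fun n : ℕ => ENNReal.ofReal (legendreSum j k fun r => truncLogRatio n (j r) (k r)))
      atTop (𝓝 (∑ r, bes (j r) (k r))) := by
  simp only [legendreSum]
  refine (tendsto_finsetSum _ fun r _ =>
    tendsto_ofReal_legendreTerm_truncLogRatio (hj r) (hk r)).congr fun n => ?_
  exact (ENNReal.ofReal_sum_of_nonneg fun r _ =>
    legendreTerm_truncLogRatio_nonneg n (hj r) (hk r)).symm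

end Vector

theorem measurable_truncLogRatio (n : ℕ) :
    Measurable fun p : ℝ × ℝ => truncLogRatio n p.1 p.2 := by
  unfold truncLogRatio
  refine Measurable.ite (measurable_fst (measurableSet_singleton 0)) measurable_const
    (Measurable.ite (measurable_snd (measurableSet_singleton 0)) measurable_const ?_)
  fun_prop

theorem ofReal_integral_le_lintegral_ofReal {α : Type*} [MeasurableSpace α] {μ : Measure α}
    (f : α → ℝ) : ENNReal.ofReal (∫ t, f t ∂μ) ≤ ∫⁻ t, ENNReal.ofReal (f t) ∂μ := by
  by_cases hf : Integrable f μ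
  · refine (ENNReal.ofReal_le_ofReal ?_).trans ENNReal.ofReal_toReal_le
    rw [integral_eq_lintegral_pos_part_sub_lintegral_neg_part hf]
    exact sub_le_self _ ENNReal.toReal_nonneg
  · simp [integral_undef hf]

section Integral

variable {α ℛ : Type*} [MeasurableSpace α] [Fintype ℛ] {μ : Measure α} {j K ζ : α → ℛ → ℝ}

theorem ofReal_integral_legendreSum_le_lintegral_bes (hj : ∀ᵐ t ∂μ, ∀ r, 0 ≤ j t r)
    (hK : ∀ᵐ t ∂μ, ∀ r, 0 ≤ K t r) (ζ : α → ℛ → ℝ) :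
    ENNReal.ofReal (∫ t, legendreSum (j t) (K t) (ζ t) ∂μ) ≤
      ∫⁻ t, ∑ r, bes (j t r) (K t r) ∂μ :=
  (ofReal_integral_le_lintegral_ofReal _).trans <| lintegral_mono_ae <| by
    filter_upwards [hj, hK] with t hjt hKt using ofReal_legendreSum_le_sum_bes hjt hKt (ζ t)

theorem aestronglyMeasurable_legendreSum (hj : AEStronglyMeasurable j μ)
    (hK : AEStronglyMeasurable K μ) (hζ : AEStronglyMeasurable ζ μ) :
    AEStronglyMeasurable (fun t => legendreSum (j t) (K t) (ζ t)) μ :=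
  continuous_legendreSum.comp_aestronglyMeasurable (hj.prodMk (hK.prodMk hζ))

variable [IsFiniteMeasure μ] {B C : ℝ}

theorem integrable_legendreSum (hj : Integrable j μ) (hK : AEStronglyMeasurable K μ)
    (hKC : ∀ᵐ t ∂μ, ‖K t‖ ≤ C) (hζ : AEStronglyMeasurable ζ μ) (hζB : ∀ t, ‖ζ t‖ ≤ B) :
    Integrable (fun t => legendreSum (j t) (K t) (ζ t)) μ := by
  refine Integrable.mono' (g := fun t => Fintype.card ℛ * (B * ‖j t‖ + C * (Real.exp B + 1)))
    (((hj.norm.const_mul B).add (integrable_const _)).const_mul _)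
    (aestronglyMeasurable_legendreSum hj.1 hK hζ) ?_
  filter_upwards [hKC] with t hKt using abs_legendreSum_le (hζB t) hKt

theorem tendsto_integral_legendreSum {ζs : ℕ → α → ℛ → ℝ} (hj : Integrable j μ)
    (hK : AEStronglyMeasurable K μ) (hKC : ∀ᵐ t ∂μ, ‖K t‖ ≤ C)
    (hζs : ∀ m, AEStronglyMeasurable (ζs m) μ) (hζsB : ∀ m t, ‖ζs m t‖ ≤ B)
    (hlim : ∀ᵐ t ∂μ, Tendsto (fun m => ζs m t) atTop (𝓝 (ζ t))) :
    Tendsto (fun m => ∫ t, legendreSum (j t) (K t) (ζs m t) ∂μ) atTop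
      (𝓝 (∫ t, legendreSum (j t) (K t) (ζ t) ∂μ)) := by
  refine tendsto_integral_of_dominated_convergence
    (fun t => Fintype.card ℛ * (B * ‖j t‖ + C * (Real.exp B + 1)))
    (fun m => aestronglyMeasurable_legendreSum hj.1 hK (hζs m))
    (((hj.norm.const_mul B).add (integrable_const _)).const_mul _)
    (fun m => by filter_upwards [hKC] with t hKt using abs_legendreSum_le (hζsB m t) hKt) ?_
  filter_upwards [hlim] with t ht
  exact (continuous_legendreSum.tendsto _).comp
    (tendsto_const_nhds.prodMk_nhds (tendsto_const_nhds.prodMk_nhds ht))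

/-- Fatou's lemma along the truncated maximisers `truncLogRatio n`. -/
theorem lintegral_sum_bes_le {S : ENNReal} (hj : Integrable j μ) (hj0 : ∀ᵐ t ∂μ, ∀ r, 0 ≤ j t r)
    (hK : AEStronglyMeasurable K μ) (hK0 : ∀ᵐ t ∂μ, ∀ r, 0 ≤ K t r) (hKC : ∀ᵐ t ∂μ, ‖K t‖ ≤ C)
    (hS : ∀ (ζ : α → ℛ → ℝ) (B : ℝ), AEStronglyMeasurable ζ μ → (∀ t, ‖ζ t‖ ≤ B) →
      ENNReal.ofReal (∫ t, legendreSum (j t) (K t) (ζ t) ∂μ) ≤ S) :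
    ∫⁻ t, ∑ r, bes (j t r) (K t r) ∂μ ≤ S := by
  set ζ : ℕ → α → ℛ → ℝ := fun n t r => truncLogRatio n (j t r) (K t r)
  have hζ (n : ℕ) : AEStronglyMeasurable (ζ n) μ :=
    (aemeasurable_pi_lambda _ fun r => (measurable_truncLogRatio n).comp_aemeasurable
      ((hj.1.aemeasurable.eval r).prodMk (hK.aemeasurable.eval r))).aestronglyMeasurable
  have hζB (n : ℕ) (t : α) : ‖ζ n t‖ ≤ n :=
    (pi_norm_le_iff_of_nonneg n.cast_nonneg).2 fun r => abs_truncLogRatio_le n _ _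
  set g : ℕ → α → ℝ := fun n t => legendreSum (j t) (K t) (ζ n t)
  have hg (n : ℕ) : ENNReal.ofReal (∫ t, g n t ∂μ) = ∫⁻ t, ENNReal.ofReal (g n t) ∂μ := by
    refine ofReal_integral_eq_lintegral_ofReal (integrable_legendreSum hj hK hKC (hζ n) (hζB n)) ?_
    filter_upwards [hj0, hK0] with t hjt hKt
    exact Finset.sum_nonneg fun r _ => legendreTerm_truncLogRatio_nonneg n (hjt r) (hKt r)
  have hlim : ∀ᵐ t ∂μ, Tendsto (fun n => ENNReal.ofReal (g n t)) atTop
      (𝓝 (∑ r, bes (j t r) (K t r))) := by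
    filter_upwards [hj0, hK0] with t hjt hKt
    exact tendsto_ofReal_legendreSum_truncLogRatio hjt hKt
  calc ∫⁻ t, ∑ r, bes (j t r) (K t r) ∂μ
      = ∫⁻ t, liminf (fun n => ENNReal.ofReal (g n t)) atTop ∂μ :=
        lintegral_congr_ae (by filter_upwards [hlim] with t ht using ht.liminf_eq.symm)
    _ ≤ liminf (fun n => ∫⁻ t, ENNReal.ofReal (g n t) ∂μ) atTop :=
        lintegral_liminf_le' fun n =>
          (aestronglyMeasurable_legendreSum hj.1 hK (hζ n)).aemeasurable.ennreal_ofReal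
    _ ≤ S := by
        simp only [← hg]
        exact liminf_le_of_frequently_le' (Frequently.of_forall fun n => hS _ _ (hζ n) (hζB n))

end Integral

section Interval

variable {a b : ℝ}

theorem exists_contDiff_cutoff_tendsto_one (hab : a < b) :
    ∃ χ : ℕ → ℝ → ℝ,
      (∀ m, ContDiff ℝ ∞ (χ m) ∧ HasCompactSupport (χ m) ∧ tsupport (χ m) ⊆ Ioo a b) ∧
      (∀ m t, χ m t ∈ Icc 0 1) ∧ ∀ t ∈ Ioo a b, Tendsto (fun m => χ m t) atTop (𝓝 1) := by
  set h := (b - a) / 2 with h_def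
  have hε (m : ℕ) : 0 < h / (m + 3) ∧ h / (m + 3) ≤ h / 3 :=
    ⟨by positivity, div_le_div_of_nonneg_left (by linarith) (by norm_num) (by simp)⟩
  let χ (m : ℕ) : ContDiffBump ((a + b) / 2) :=
    ⟨h - 2 * (h / (m + 3)), h - h / (m + 3), by linarith [hε m], by linarith [hε m]⟩
  refine ⟨fun m => χ m, fun m => ⟨(χ m).contDiff, (χ m).hasCompactSupport, ?_⟩,
    fun m t => ⟨(χ m).nonneg, (χ m).le_one⟩, fun t ht => tendsto_const_nhds.congr' ?_⟩
  · rw [(χ m).tsupport_eq]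
    intro t ht
    rw [Metric.mem_closedBall, Real.dist_eq, abs_le] at ht
    have hrOut : (χ m).rOut = h - h / (m + 3) := rfl
    constructor <;> linarith [ht.1, ht.2, hε m, hrOut]
  · have hrIn : Tendsto (fun m : ℕ => (χ m).rIn) atTop (𝓝 h) := by
      simpa using tendsto_const_nhds.sub (((tendsto_const_div_atTop_nhds_zero_nat h).comp
        (tendsto_add_atTop_nat 3)).const_mul 2)
    have hdist : dist t ((a + b) / 2) < h := by
      rw [Real.dist_eq, abs_lt]; constructor <;> linarith [ht.1, ht.2]
    filter_upwards [hrIn.eventually_const_lt hdist] with m hm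
    exact ((χ m).one_of_mem_closedBall (Metric.mem_closedBall.2 hm.le)).symm

variable {ℛ : Type*} [Fintype ℛ]

theorem exists_contDiff_tendsto_ae_restrict_Ioo (hab : a < b) {ζ : ℝ → ℛ → ℝ} {M : ℝ}
    (hζ : AEStronglyMeasurable ζ (volume.restrict (Ioo a b))) (hζM : ∀ t, ‖ζ t‖ ≤ M) :
    ∃ ζs : ℕ → ℝ → ℛ → ℝ,
      (∀ m, ContDiff ℝ ∞ (ζs m) ∧ HasCompactSupport (ζs m) ∧ tsupport (ζs m) ⊆ Ioo a b) ∧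
      (∀ m t, ‖ζs m t‖ ≤ M) ∧
      ∀ᵐ t ∂(volume.restrict (Ioo a b)), Tendsto (fun m => ζs m t) atTop (𝓝 (ζ t)) := by
  set f := (Ioo a b).indicator ζ
  have hf : AEStronglyMeasurable f volume :=
    (aestronglyMeasurable_indicator_iff measurableSet_Ioo).2 hζ
  have hfM (t : ℝ) : ‖f t‖ ≤ M := (norm_indicator_le_norm_self ζ t).trans (hζM t)
  have hf_li : LocallyIntegrable f volume :=
    ((integrable_indicator_iff measurableSet_Ioo).2
      (IntegrableOn.of_bound measure_Ioo_lt_top hζ M (ae_of_all _ hζM))).locallyIntegrable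
  let φ (m : ℕ) : ContDiffBump (0 : ℝ) := ⟨1 / (m + 1), 2 / (m + 1), by positivity, by
    gcongr; norm_num⟩
  set ψ : ℕ → ℝ → ℛ → ℝ := fun m => (φ m).normed volume ⋆[ContinuousLinearMap.lsmul ℝ ℝ] f
  have hψ (m : ℕ) : ContDiff ℝ ∞ (ψ m) :=
    (φ m).hasCompactSupport_normed.contDiff_convolution_left _ (φ m).contDiff_normed hf_li
  have hψM (m : ℕ) (t : ℝ) : ‖ψ m t‖ ≤ M := by
    simpa using dist_convolution_le (z₀ := 0) ((norm_nonneg _).trans (hfM 0))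
      (φ m).support_normed_eq.subset (φ m).nonneg_normed (φ m).integral_normed hf
      fun x _ => by simpa using hfM x
  have hψf : ∀ᵐ t, Tendsto (fun m => ψ m t) atTop (𝓝 (f t)) := by
    refine ContDiffBump.ae_convolution_tendsto_right_of_locallyIntegrable (K := 2) ?_
      (Eventually.of_forall fun m => ?_) hf_li
    · show Tendsto (fun m : ℕ => 2 / ((m : ℝ) + 1)) atTop (𝓝 0)
      simpa [div_eq_mul_inv] using tendsto_one_div_add_atTop_nhds_zero_nat.const_mul (2 : ℝ)
    · show 2 / ((m : ℝ) + 1) ≤ 2 * (1 / (m + 1))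
      rw [mul_one_div]
  obtain ⟨χ, hχ, hχ01, hχ1⟩ := exists_contDiff_cutoff_tendsto_one hab
  refine ⟨fun m t => χ m t • ψ m t, fun m => ⟨(hχ m).1.smul (hψ m), (hχ m).2.1.smul_right,
    (tsupport_smul_subset_left _ _).trans (hχ m).2.2⟩, fun m t => ?_, ?_⟩
  · rw [norm_smul, Real.norm_of_nonneg (hχ01 m t).1]
    exact (mul_le_of_le_one_left (norm_nonneg _) (hχ01 m t).2).trans (hψM m t)
  · filter_upwards [ae_restrict_of_ae hψf, ae_restrict_mem measurableSet_Ioo] with t hψt ht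
    simpa [f, indicator_of_mem ht] using (hχ1 t ht).smul hψt

theorem ofReal_integral_legendreSum_le_iSup (hab : a < b) {j K ζ : ℝ → ℛ → ℝ} {B C : ℝ}
    (hj : IntegrableOn j (Ioo a b)) (hK : AEStronglyMeasurable K (volume.restrict (Ioo a b)))
    (hKC : ∀ᵐ t ∂(volume.restrict (Ioo a b)), ‖K t‖ ≤ C)
    (hζ : AEStronglyMeasurable ζ (volume.restrict (Ioo a b))) (hζB : ∀ t, ‖ζ t‖ ≤ B) :
    ENNReal.ofReal (∫ t in Ioo a b, legendreSum (j t) (K t) (ζ t)) ≤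
      ⨆ φ : {φ : ℝ → ℛ → ℝ // ContDiff ℝ 1 φ ∧ HasCompactSupport φ ∧ tsupport φ ⊆ Ioo a b},
        ENNReal.ofReal (∫ t in Ioo a b, legendreSum (j t) (K t) (φ.1 t)) := by
  obtain ⟨ζs, hζs, hζsB, hlim⟩ := exists_contDiff_tendsto_ae_restrict_Ioo hab hζ hζB
  refine le_of_tendsto' ((ENNReal.continuous_ofReal.tendsto _).comp
    (tendsto_integral_legendreSum hj hK hKC
      (fun m => (hζs m).1.continuous.aestronglyMeasurable) hζsB hlim)) fun m => ?_
  exact le_iSup_of_le ⟨ζs m, (hζs m).1.of_le (by exact_mod_cast le_top), (hζs m).2⟩ le_rfl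

theorem continuousOn_of_eq_add_integral {E : Type*} [NormedAddCommGroup E] [NormedSpace ℝ E]
    {f g : ℝ → E} (hab : a ≤ b) (hg : IntegrableOn g (Ioo a b))
    (hf : ∀ t ∈ Icc a b, f t = f a + ∫ s in a..t, g s) : ContinuousOn f (Icc a b) := by
  have hprim := intervalIntegral.continuousOn_primitive_interval (a := a) (b := b) (μ := volume)
    (f := g) (by rwa [uIcc_of_le hab, integrableOn_Icc_iff_integrableOn_Ioo])
  rw [uIcc_of_le hab] at hprim
  exact (continuousOn_const.add hprim).congr hf

end Interval

theorem stmt4_general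
    {𝒴 ℛ : Type*} [Fintype 𝒴] [Fintype ℛ]
    (T : ℝ) (hT : 0 < T)
    (kbar : (𝒴 → ℝ) → ℛ → ℝ)
    (hk_cont : ContinuousOn kbar {c : 𝒴 → ℝ | ∀ y, 0 ≤ c y})
    (hk_nonneg : ∀ c : 𝒴 → ℝ, (∀ y, 0 ≤ c y) → ∀ r, 0 ≤ kbar c r)
    (c : ℝ → 𝒴 → ℝ)
    (dc : ℝ → 𝒴 → ℝ) (dw : ℝ → ℛ → ℝ)
    (hdc_int : IntegrableOn dc (Set.Ioo 0 T))
    (hdw_int : IntegrableOn dw (Set.Ioo 0 T))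
    (hc_AC : ∀ t ∈ Set.Icc (0:ℝ) T, c t = c 0 + ∫ s in (0:ℝ)..t, dc s)
    (hcpos : ∀ t ∈ Set.Icc (0:ℝ) T, ∀ y, 0 ≤ c t y)
    (hdw_nonneg : ∀ᵐ t ∂(volume.restrict (Set.Ioo (0:ℝ) T)), ∀ r, 0 ≤ dw t r) :
    (⨆ ζ : {ζ : ℝ → ℛ → ℝ //
        ContDiff ℝ 1 ζ ∧ HasCompactSupport ζ ∧ tsupport ζ ⊆ Set.Ioo 0 T},
      ENNReal.ofReal (∫ t in Set.Ioo (0:ℝ) T,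
        ∑ r, ((ζ : ℝ → ℛ → ℝ) t r * dw t r
          - kbar (c t) r * (Real.exp ((ζ : ℝ → ℛ → ℝ) t r) - 1))))
    = ∫⁻ t in Set.Ioo (0:ℝ) T, ∑ r, bes (dw t r) (kbar (c t) r) := by
  have hK : ContinuousOn (fun t => kbar (c t)) (Icc 0 T) :=
    hk_cont.comp (continuousOn_of_eq_add_integral hT.le hdc_int hc_AC) hcpos
  obtain ⟨C, hC⟩ := isCompact_Icc.exists_bound_of_continuousOn hK
  have hIcc : ∀ᵐ t ∂(volume.restrict (Ioo 0 T)), t ∈ Icc 0 T :=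
    ae_restrict_of_forall_mem measurableSet_Ioo fun _ ht => Ioo_subset_Icc_self ht
  have hK_meas : AEStronglyMeasurable (fun t => kbar (c t)) (volume.restrict (Ioo 0 T)) :=
    (hK.aestronglyMeasurable measurableSet_Icc).mono_set Ioo_subset_Icc_self
  have hK0 : ∀ᵐ t ∂(volume.restrict (Ioo 0 T)), ∀ r, 0 ≤ kbar (c t) r := by
    filter_upwards [hIcc] with t ht using hk_nonneg _ (hcpos t ht)
  have hKC : ∀ᵐ t ∂(volume.restrict (Ioo 0 T)), ‖kbar (c t)‖ ≤ C := by
    filter_upwards [hIcc] with t ht using hC t ht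
  refine le_antisymm
    (iSup_le fun ζ => ofReal_integral_legendreSum_le_lintegral_bes hdw_nonneg hK0 ζ.1) ?_
  exact lintegral_sum_bes_le hdw_int hdw_nonneg hK_meas hK0 hKC fun ζ B hζ hζB =>
    ofReal_integral_legendreSum_le_iSup hT hdw_int hK_meas hKC hζ hζB

/-- for continuous `k̄` and any `(c,w) ∈ W^{1,1}((0,T); ℝ^𝒴₊ × ℝ^ℛ₊)` with
`ẇ ≥ 0` a.e., the supremum of `G(c,w,ζ)` over `ζ ∈ C¹_c((0,T); ℝ^ℛ)` equals
`∫₀ᵀ Σ_r s(ẇ^r(t) | k̄^r(c(t))) dt`, as values in `[0,∞]`. -/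
theorem stmt4
    {𝒴 ℛ : Type*} [Fintype 𝒴] [Fintype ℛ]
    (T : ℝ) (hT : 0 < T)
    (kbar : (𝒴 → ℝ) → ℛ → ℝ)
    (hk_cont : ContinuousOn kbar {c : 𝒴 → ℝ | ∀ y, 0 ≤ c y})
    (hk_nonneg : ∀ c : 𝒴 → ℝ, (∀ y, 0 ≤ c y) → ∀ r, 0 ≤ kbar c r)
    (c : ℝ → 𝒴 → ℝ) (w : ℝ → ℛ → ℝ)
    (dc : ℝ → 𝒴 → ℝ) (dw : ℝ → ℛ → ℝ)
    (hdc_int : IntegrableOn dc (Set.Ioo 0 T))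
    (hdw_int : IntegrableOn dw (Set.Ioo 0 T))
    (hc_AC : ∀ t ∈ Set.Icc (0:ℝ) T, c t = c 0 + ∫ s in (0:ℝ)..t, dc s)
    (hw_AC : ∀ t ∈ Set.Icc (0:ℝ) T, w t = w 0 + ∫ s in (0:ℝ)..t, dw s)
    (hcpos : ∀ t ∈ Set.Icc (0:ℝ) T, ∀ y, 0 ≤ c t y)
    (hwpos : ∀ t ∈ Set.Icc (0:ℝ) T, ∀ r, 0 ≤ w t r)
    (hdw_nonneg : ∀ᵐ t ∂(volume.restrict (Set.Ioo (0:ℝ) T)), ∀ r, 0 ≤ dw t r) :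
    (⨆ ζ : {ζ : ℝ → ℛ → ℝ //
        ContDiff ℝ 1 ζ ∧ HasCompactSupport ζ ∧ tsupport ζ ⊆ Set.Ioo 0 T},
      ENNReal.ofReal (∫ t in Set.Ioo (0:ℝ) T,
        ∑ r, ((ζ : ℝ → ℛ → ℝ) t r * dw t r
          - kbar (c t) r * (Real.exp ((ζ : ℝ → ℛ → ℝ) t r) - 1))))
    = ∫⁻ t in Set.Ioo (0:ℝ) T, ∑ r, bes (dw t r) (kbar (c t) r) :=
  stmt4_general T hT kbar hk_cont hk_nonneg c dc dw hdc_int hdw_int hc_AC hcpos hdw_nonneg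
end

section
/- (Approximation Lemma I.) Assume k̄ satisfies assumptions (iii)–(vi), and additionally that for each r ∈ ℛ there exists ĉ^r ∈ ℝ^𝒴_+ with k̄^r(ĉ^r) > 0. Let I_0 : ℝ^𝒴_+ → [0,∞) be continuous. Given (c,w) ∈ W^{1,1}((0,T); ℝ^𝒴_+ × ℝ^ℛ_+) with ẇ ≥ 0 a.e., ċ = Γẇ a.e., and J(c,w) < ∞, there exists a family (c_δ,w_δ)_{δ∈(0,1)} of absolutely continuous pairs with values in ℝ^𝒴_+ × ℝ^ℛ_+, with ẇ_δ ≥ 0 and ċ_δ = Γẇ_δ a.e., such that as δ → 0: (i) c_δ(0) → c(0) and (c_δ,w_δ) → (c,w) in the hybrid sense; (ii) I_0(c_δ(0)) + J(c_δ,w_δ) → I_0(c(0)) + J(c,w); and (iii) for each fixed δ > 0, inf over t ∈ (0,T) and r ∈ ℛ of k̄^r(c_δ(t)) is strictly positive. -/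
open MeasureTheory Real Set Filter Topology

/-- The nonnegative cone `ℝ^𝒴₊`. -/
def nonnegCone (𝒴 : Type*) : Set (𝒴 → ℝ) := {c | ∀ y, 0 ≤ c y}

/-- The stoichiometric simplex `S(c)`. -/
def stoichSimplex {𝒴 ℛ : Type*} [Fintype ℛ] (γ : ℛ → 𝒴 → ℝ) (c : 𝒴 → ℝ) :
    Set (𝒴 → ℝ) :=
  {c' | (∃ w : ℛ → ℝ, (∀ r, 0 ≤ w r) ∧ c' = fun y => c y + ∑ r, w r * γ r y)
        ∧ ∀ y, 0 ≤ c' y}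

/-- The fattened stoichiometric simplex `S_ε(c)`. -/
def stoichSimplexEps {𝒴 ℛ : Type*} [Fintype 𝒴] [Fintype ℛ]
    (γ : ℛ → 𝒴 → ℝ) (c : 𝒴 → ℝ) (ε : ℝ) : Set (𝒴 → ℝ) :=
  {c' | ∃ c₁ : 𝒴 → ℝ, ‖c₁ - c‖ ≤ ε ∧ c' ∈ stoichSimplex γ c₁}

lemma measurable_bes : Measurable (fun p : ℝ × ℝ => bes p.1 p.2) := by
  refine Measurable.ite (measurableSet_eq_fun measurable_fst measurable_const)
    (ENNReal.measurable_ofReal.comp measurable_snd) ?_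
  refine Measurable.ite (measurableSet_eq_fun measurable_snd measurable_const) measurable_const ?_
  exact ENNReal.measurable_ofReal.comp (by fun_prop)

lemma bes_zero_left (k : ℝ) : bes 0 k = ENNReal.ofReal k := if_pos rfl

lemma bes_of_ne_zero {j k : ℝ} (hj : j ≠ 0) (hk : k ≠ 0) :
    bes j k = ENNReal.ofReal (j * log (j / k) - j + k) := by
  rw [bes, if_neg hj, if_neg hk]

lemma ne_zero_of_bes_ne_top {j k : ℝ} (h : bes j k ≠ ⊤) (hj : j ≠ 0) : k ≠ 0 := by
  rintro rfl
  simp [bes, hj] at h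

lemma mul_log_div_sub_add_nonneg {j k : ℝ} (hj : 0 < j) (hk : 0 < k) :
    0 ≤ j * log (j / k) - j + k := by
  have h := mul_le_mul_of_nonneg_left (one_sub_inv_le_log_of_pos (div_pos hj hk)) hj.le
  rw [inv_div, mul_sub, mul_one, mul_div_cancel₀ _ hj.ne'] at h
  linarith

lemma mul_log_div_sub_add_le {j k k' θ M : ℝ} (hj : 0 < j) (hk : 0 < k) (hθ : θ ∈ Ioc 0 1)
    (hk' : 0 < k') (hk2 : k / 2 ≤ k') (hkM : k' ≤ M) :
    θ * j * log (θ * j / k') - θ * j + k' ≤ (j * log (j / k) - j + k) + j * (1 + log 2) + M := by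
  have hs := mul_log_div_sub_add_nonneg hj hk
  have hθj' : 0 < θ * j := mul_pos hθ.1 hj
  have hθj : θ * j ≤ j := mul_le_of_le_one_left hj.le hθ.2
  have hlog2 : 0 ≤ log 2 := log_nonneg one_le_two
  rcases le_or_gt (θ * j) k' with hle | hgt
  · have : log (θ * j / k') ≤ 0 := log_nonpos (by positivity) ((div_le_one hk').2 hle)
    nlinarith [mul_nonpos_of_nonneg_of_nonpos hθj'.le this]
  · have hlog : log (θ * j / k') ≤ log (j / k) + log 2 := by
      rw [← log_mul (by positivity) two_ne_zero]
      refine log_le_log (by positivity) ?_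
      calc θ * j / k' ≤ j / (k / 2) := div_le_div₀ hj.le hθj (by positivity) hk2
      _ = j / k * 2 := by field_simp
    have := mul_le_mul hθj hlog (log_pos ((one_lt_div hk').2 hgt)).le hj.le
    nlinarith

lemma bes_mul_le {j k k' θ M : ℝ} (hj : 0 ≤ j) (hjk : j ≠ 0 → 0 < k) (hθ : θ ∈ Icc 0 1)
    (hk' : 0 < k') (hk2 : k / 2 ≤ k') (hkM : k' ≤ M) :
    bes (θ * j) k' ≤ bes j k + ENNReal.ofReal (j * (1 + log 2) + M) := by
  rcases (mul_nonneg hθ.1 hj).eq_or_lt' with h0 | hpos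
  · rw [h0, bes_zero_left]
    exact (ENNReal.ofReal_le_ofReal (by nlinarith [log_nonneg one_le_two])).trans le_add_self
  · have hj' : 0 < j := pos_of_mul_pos_right hpos hθ.1
    have hk := hjk hj'.ne'
    rw [bes_of_ne_zero hpos.ne' hk'.ne', bes_of_ne_zero hj'.ne' hk.ne',
      ← ENNReal.ofReal_add (mul_log_div_sub_add_nonneg hj' hk)
        (by nlinarith [log_nonneg one_le_two]), ← add_assoc]
    exact ENNReal.ofReal_le_ofReal (mul_log_div_sub_add_le hj' hk
      ⟨pos_of_mul_pos_left hpos hj, hθ.2⟩ hk' hk2 hkM)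

lemma tendsto_bes_mul {ι : Type*} {l : Filter ι} {θ kₙ : ι → ℝ} {j k : ℝ} (hj : 0 ≤ j)
    (hjk : j ≠ 0 → 0 < k) (hθ : Tendsto θ l (𝓝 1)) (hkₙ : Tendsto kₙ l (𝓝 k)) :
    Tendsto (fun n => bes (θ n * j) (kₙ n)) l (𝓝 (bes j k)) := by
  rcases hj.eq_or_lt' with rfl | hj
  · simpa only [mul_zero, bes_zero_left] using ENNReal.tendsto_ofReal hkₙ
  have hk := hjk hj.ne'
  have hθj : Tendsto (fun n => θ n * j) l (𝓝 j) := by simpa using hθ.mul_const j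
  have hev : (fun n => ENNReal.ofReal (θ n * j * log (θ n * j / kₙ n) - θ n * j + kₙ n))
      =ᶠ[l] fun n => bes (θ n * j) (kₙ n) := by
    filter_upwards [hθj.eventually_ne hj.ne', hkₙ.eventually_ne hk.ne'] with n h1 h2
    exact (bes_of_ne_zero h1 h2).symm
  rw [bes_of_ne_zero hj.ne' hk.ne']
  refine (ENNReal.tendsto_ofReal ?_).congr' hev
  exact ((hθj.mul ((hθj.div hkₙ hk.ne').log (div_pos hj hk).ne')).sub hθj).add hkₙ

section EntropyFunctional

variable {α ℛ : Type*} [MeasurableSpace α] {μ : Measure α} [Fintype ℛ]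

lemma AEMeasurable.sum_bes {x y : α → ℛ → ℝ} (hx : AEMeasurable x μ) (hy : AEMeasurable y μ) :
    AEMeasurable (fun a => ∑ r, bes (x a r) (y a r)) μ :=
  Finset.aemeasurable_fun_sum _ fun r _ =>
    measurable_bes.comp_aemeasurable ((hx.eval r).prodMk (hy.eval r))

lemma ae_pos_of_lintegral_sum_bes_ne_top {j k : α → ℛ → ℝ} (hj : AEMeasurable j μ)
    (hk : AEMeasurable k μ) (hk_nonneg : ∀ᵐ a ∂μ, ∀ r, 0 ≤ k a r)
    (hJ : ∫⁻ a, ∑ r, bes (j a r) (k a r) ∂μ ≠ ⊤) :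
    ∀ᵐ a ∂μ, ∀ r, j a r ≠ 0 → 0 < k a r := by
  filter_upwards [ae_lt_top' (hj.sum_bes hk) hJ, hk_nonneg] with a hfin hk0 r hr
  have : bes (j a r) (k a r) ≠ ⊤ := ne_top_of_le_ne_top hfin.ne
    (Finset.single_le_sum (f := fun r => bes (j a r) (k a r)) (fun _ _ => zero_le)
      (Finset.mem_univ r))
  exact (hk0 r).lt_of_ne' (ne_zero_of_bes_ne_top this hr)

theorem tendsto_lintegral_sum_bes [IsFiniteMeasure μ] {ι : Type*} {l : Filter ι}
    [l.IsCountablyGenerated] {θ : ι → ℝ} {j k : α → ℛ → ℝ} {kₙ : ι → α → ℛ → ℝ} {M : ℝ}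
    (hθ : Tendsto θ l (𝓝 1)) (hθ_mem : ∀ᶠ n in l, θ n ∈ Icc 0 1)
    (hj : Integrable j μ) (hj_nonneg : ∀ᵐ a ∂μ, ∀ r, 0 ≤ j a r)
    (hk : AEMeasurable k μ) (hk_nonneg : ∀ᵐ a ∂μ, ∀ r, 0 ≤ k a r)
    (hJ : ∫⁻ a, ∑ r, bes (j a r) (k a r) ∂μ ≠ ⊤)
    (hkₙ_meas : ∀ᶠ n in l, AEMeasurable (kₙ n) μ)
    (hkₙ_bound : ∀ᶠ n in l, ∀ᵐ a ∂μ, ∀ r, k a r / 2 ≤ kₙ n a r ∧ 0 < kₙ n a r ∧ kₙ n a r ≤ M)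
    (hkₙ_lim : ∀ᵐ a ∂μ, ∀ r, Tendsto (fun n => kₙ n a r) l (𝓝 (k a r))) :
    Tendsto (fun n => ∫⁻ a, ∑ r, bes (θ n * j a r) (kₙ n a r) ∂μ) l
      (𝓝 (∫⁻ a, ∑ r, bes (j a r) (k a r) ∂μ)) := by
  have hsupp := ae_pos_of_lintegral_sum_bes_ne_top hj.aemeasurable hk hk_nonneg hJ
  refine tendsto_lintegral_filter_of_dominated_convergence'
    (fun a => ∑ r, (bes (j a r) (k a r) + ENNReal.ofReal (j a r * (1 + log 2) + M))) ?_ ?_ ?_ ?_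
  · filter_upwards [hkₙ_meas] with n hn
    exact (hj.aemeasurable.const_smul (θ n)).sum_bes hn
  · filter_upwards [hθ_mem, hkₙ_bound] with n hθn hbound
    filter_upwards [hbound, hj_nonneg, hsupp] with a hb hj0 hs
    exact Finset.sum_le_sum fun r _ =>
      bes_mul_le (hj0 r) (hs r) hθn (hb r).2.1 (hb r).1 (hb r).2.2
  · simp only [Finset.sum_add_distrib]
    rw [lintegral_add_left' (hj.aemeasurable.sum_bes hk),
      lintegral_finsetSum' _ fun r _ => ((hj.aemeasurable.eval r).mul_const _).add_const _
        |>.ennreal_ofReal]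
    exact ENNReal.add_ne_top.2 ⟨hJ, (ENNReal.sum_lt_top.2 fun r _ =>
      (((hj.eval r).mul_const _).add (integrable_const M)).lintegral_lt_top).ne⟩
  · filter_upwards [hj_nonneg, hsupp, hkₙ_lim] with a hj0 hs hlim
    exact tendsto_finsetSum _ fun r _ => tendsto_bes_mul (hj0 r) (hs r) hθ (hlim r)

end EntropyFunctional

lemma pos_of_strictMonoOn_of_bijOn {ψ : ℝ → ℝ} (hψ_mono : StrictMonoOn ψ (Icc 0 1))
    (hψ_bij : BijOn ψ (Icc 0 1) (Icc 0 1)) {δ : ℝ} (hδ : δ ∈ Ioc 0 1) : 0 < ψ δ :=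
  (hψ_bij.mapsTo (left_mem_Icc.2 zero_le_one)).1.trans_lt
    (hψ_mono (left_mem_Icc.2 zero_le_one) (Ioc_subset_Icc_self hδ) hδ.1)

lemma eventually_le_apply_one_sub {ψ : ℝ → ℝ} (hψ_mono : StrictMonoOn ψ (Icc 0 1))
    (hψ_bij : BijOn ψ (Icc 0 1) (Icc 0 1)) {a : ℝ} (ha : a ∈ Ico 0 1) :
    ∀ᶠ δ in 𝓝[>] 0, a ≤ ψ (1 - δ) := by
  obtain ⟨x, hx, rfl⟩ := hψ_bij.surjOn (Ico_subset_Icc_self ha)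
  have hx1 : x < 1 := by
    refine hx.2.lt_of_ne fun h => ?_
    subst h
    obtain ⟨z, hz, hz1⟩ := hψ_bij.surjOn (right_mem_Icc.2 zero_le_one)
    linarith [hψ_mono.monotoneOn hz hx hz.2, ha.2]
  filter_upwards [Ioo_mem_nhdsGT (sub_pos.2 hx1)] with δ hδ
  exact hψ_mono.monotoneOn hx ⟨by linarith [hx.1, hδ.2], by linarith [hδ.1]⟩ (by linarith [hδ.2])

lemma exists_pos_forall_le_of_forall_pos {ι : Type*} [Finite ι] {f : ι → ℝ}
    (hf : ∀ i, 0 < f i) : ∃ κ > 0, ∀ i, κ ≤ f i :=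
  have : ∀ᶠ κ in 𝓝[>] (0:ℝ), ∀ i, κ ≤ f i :=
    eventually_all.2 fun i => (eventually_le_nhds (hf i)).filter_mono nhdsWithin_le_nhds
  (this.and self_mem_nhdsWithin).exists.imp fun _ h => ⟨h.2, h.1⟩

lemma continuousOn_Icc_of_eq_add_integral {E : Type*} [NormedAddCommGroup E] [NormedSpace ℝ E]
    {f df : ℝ → E} {T : ℝ} (hT : 0 ≤ T) (hdf : IntegrableOn df (Ioo 0 T))
    (hf : ∀ t ∈ Icc 0 T, f t = f 0 + ∫ s in (0:ℝ)..t, df s) : ContinuousOn f (Icc 0 T) := by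
  have h := intervalIntegral.continuousOn_primitive_interval (μ := volume) (a := 0) (b := T)
    (f := df) (by rwa [uIcc_of_le hT, integrableOn_Icc_iff_integrableOn_Ioo])
  rw [uIcc_of_le hT] at h
  exact (continuousOn_const.add h).congr hf

lemma smul_add_eq_add_integral_smul {E : Type*} [NormedAddCommGroup E] [NormedSpace ℝ E]
    {f df : ℝ → E} {t : ℝ} (hf : f t = f 0 + ∫ s in (0:ℝ)..t, df s) (a : ℝ) (b : E) :
    a • f t + b = (a • f 0 + b) + ∫ s in (0:ℝ)..t, a • df s := by
  rw [hf, intervalIntegral.integral_smul, smul_add]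
  abel

lemma tendsto_integral_sum_mul_one_sub_smul {α ι : Type*} [MeasurableSpace α] [Fintype ι]
    (μ : Measure α) (φ f : α → ι → ℝ) :
    Tendsto (fun δ : ℝ => ∫ a, ∑ i, φ a i * ((1 - δ) • f a) i ∂μ) (𝓝 0)
      (𝓝 (∫ a, ∑ i, φ a i * f a i ∂μ)) := by
  have h (δ : ℝ) : ∫ a, ∑ i, φ a i * ((1 - δ) • f a) i ∂μ
      = (1 - δ) * ∫ a, ∑ i, φ a i * f a i ∂μ := by
    simp only [Pi.smul_apply, smul_eq_mul, mul_left_comm _ (1 - δ), ← Finset.mul_sum,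
      integral_const_mul]
  simp only [h]
  have : Continuous fun δ : ℝ => (1 - δ) * ∫ a, ∑ i, φ a i * f a i ∂μ := by fun_prop
  simpa using this.tendsto 0

lemma tendsto_integral_norm_one_sub_smul_add_smul_sub {α E F : Type*} [MeasurableSpace α]
    [NormedAddCommGroup E] [NormedSpace ℝ E] [NormedAddCommGroup F] [NormedSpace ℝ F]
    (μ : Measure α) (f : α → E) (g : α → F) (x : E) :
    Tendsto (fun δ : ℝ => ∫ a, (‖(1 - δ) • f a + δ • x - f a‖ + ‖(1 - δ) • g a - g a‖) ∂μ)
      (𝓝 0) (𝓝 0) := by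
  have h (δ : ℝ) : ∫ a, (‖(1 - δ) • f a + δ • x - f a‖ + ‖(1 - δ) • g a - g a‖) ∂μ
      = |δ| * ∫ a, (‖x - f a‖ + ‖g a‖) ∂μ := by
    rw [← integral_const_mul]
    congr 1 with a
    rw [show (1 - δ) • f a + δ • x - f a = δ • (x - f a) by module,
      show (1 - δ) • g a - g a = (-δ) • g a by module, norm_smul, norm_smul, norm_neg,
      Real.norm_eq_abs, mul_add]
  simp only [h]
  simpa using (continuous_abs.tendsto (0:ℝ)).mul_const (∫ a, (‖x - f a‖ + ‖g a‖) ∂μ)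

lemma tendsto_one_sub_smul_add_smul {E : Type*} [AddCommGroup E] [Module ℝ E]
    [TopologicalSpace E] [IsTopologicalAddGroup E] [ContinuousSMul ℝ E] (x y : E) :
    Tendsto (fun δ : ℝ => (1 - δ) • x + δ • y) (𝓝 0) (𝓝 x) := by
  have : Continuous fun δ : ℝ => (1 - δ) • x + δ • y := by fun_prop
  simpa using this.tendsto 0

section Rates

variable {𝒴 ℛ : Type*}

lemma one_sub_smul_add_smul_mem_nonnegCone {x y : 𝒴 → ℝ} (hx : x ∈ nonnegCone 𝒴)
    (hy : y ∈ nonnegCone 𝒴) {δ : ℝ} (hδ : δ ∈ Icc 0 1) :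
    (1 - δ) • x + δ • y ∈ nonnegCone 𝒴 := fun i =>
  add_nonneg (mul_nonneg (sub_nonneg.2 hδ.2) (hx i)) (mul_nonneg hδ.1 (hy i))

lemma tendsto_one_sub_smul_add_smul_nhdsWithin_nonnegCone {x y : 𝒴 → ℝ}
    (hx : x ∈ nonnegCone 𝒴) (hy : y ∈ nonnegCone 𝒴) :
    Tendsto (fun δ : ℝ => (1 - δ) • x + δ • y) (𝓝[>] 0) (𝓝[nonnegCone 𝒴] x) := by
  refine tendsto_nhdsWithin_iff.2
    ⟨(tendsto_one_sub_smul_add_smul x y).mono_left nhdsWithin_le_nhds, ?_⟩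
  filter_upwards [Ioo_mem_nhdsGT one_pos] with δ hδ
  exact one_sub_smul_add_smul_mem_nonnegCone hx hy (Ioo_subset_Icc_self hδ)

def MonotoneRate (kbar : (𝒴 → ℝ) → ℛ → ℝ) : Prop :=
  ∀ c chat : 𝒴 → ℝ, (∀ y, 0 ≤ c y) → (∀ y, c y ≤ chat y) → ∀ r, kbar c r ≤ kbar chat r

def SuperhomogeneousRate (kbar : (𝒴 → ℝ) → ℛ → ℝ) (ψ : ℝ → ℝ) : Prop :=
  ∀ c ∈ nonnegCone 𝒴, ∀ δ ∈ Icc (0:ℝ) 1, ∀ r, ψ δ * kbar c r ≤ kbar (fun y => δ * c y) r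

variable {kbar : (𝒴 → ℝ) → ℛ → ℝ} {ψ : ℝ → ℝ}

lemma mul_kbar_le_of_smul_le (hk_mono : MonotoneRate kbar) (hk_shom : SuperhomogeneousRate kbar ψ)
    {x z : 𝒴 → ℝ} (hx : x ∈ nonnegCone 𝒴) {a : ℝ} (ha : a ∈ Icc 0 1)
    (hxz : ∀ y, a * x y ≤ z y) (r : ℛ) : ψ a * kbar x r ≤ kbar z r :=
  (hk_shom x hx a ha r).trans (hk_mono _ z (fun y => mul_nonneg ha.1 (hx y)) hxz r)

lemma mul_kbar_le_kbar_one_sub_smul_add_smul (hk_mono : MonotoneRate kbar)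
    (hk_shom : SuperhomogeneousRate kbar ψ) {x y : 𝒴 → ℝ} (hx : x ∈ nonnegCone 𝒴)
    (hy : y ∈ nonnegCone 𝒴) {δ : ℝ} (hδ : δ ∈ Icc 0 1) (r : ℛ) :
    ψ (1 - δ) * kbar x r ≤ kbar ((1 - δ) • x + δ • y) r ∧
      ψ δ * kbar y r ≤ kbar ((1 - δ) • x + δ • y) r := by
  have hδ' : 1 - δ ∈ Icc (0:ℝ) 1 := ⟨sub_nonneg.2 hδ.2, by linarith [hδ.1]⟩
  exact ⟨mul_kbar_le_of_smul_le hk_mono hk_shom hx hδ'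
      (fun i => le_add_of_nonneg_right (mul_nonneg hδ.1 (hy i))) r,
    mul_kbar_le_of_smul_le hk_mono hk_shom hy hδ
      (fun i => le_add_of_nonneg_left (mul_nonneg hδ'.1 (hx i))) r⟩

lemma kbar_one_sub_smul_add_smul_le (hk_mono : MonotoneRate kbar) {x y : 𝒴 → ℝ}
    (hx : x ∈ nonnegCone 𝒴) (hy : y ∈ nonnegCone 𝒴) {δ : ℝ} (hδ : δ ∈ Icc 0 1) (r : ℛ) :
    kbar ((1 - δ) • x + δ • y) r ≤ kbar (x + y) r :=
  hk_mono _ _ (one_sub_smul_add_smul_mem_nonnegCone hx hy hδ) (fun i => add_le_add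
    (mul_le_of_le_one_left (hx i) (by linarith [hδ.1])) (mul_le_of_le_one_left (hy i) hδ.2)) r

lemma exists_mem_nonnegCone_forall_pos [Fintype ℛ] (hk_mono : MonotoneRate kbar)
    (hk_pos : ∀ r, ∃ chat ∈ nonnegCone 𝒴, 0 < kbar chat r) :
    ∃ ĉ ∈ nonnegCone 𝒴, ∀ r, 0 < kbar ĉ r := by
  choose ĉ hĉ hĉ_pos using hk_pos
  refine ⟨∑ r, ĉ r, fun y => ?_, fun r => (hĉ_pos r).trans_le (hk_mono _ _ (hĉ r) (fun y => ?_) r)⟩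
  · simpa only [Finset.sum_apply] using Finset.sum_nonneg fun r _ => hĉ r y
  · simpa only [Finset.sum_apply] using
      Finset.single_le_sum (f := fun r => ĉ r y) (fun r _ => hĉ r y) (Finset.mem_univ r)

theorem tendsto_lintegral_sum_bes_one_sub_smul_add_smul [Fintype ℛ] {T : ℝ}
    (hk_nonneg : ∀ c ∈ nonnegCone 𝒴, ∀ r, 0 ≤ kbar c r)
    (hk_cont : ContinuousOn kbar (nonnegCone 𝒴)) (hk_mono : MonotoneRate kbar)
    (hψ_mono : StrictMonoOn ψ (Icc 0 1)) (hψ_bij : BijOn ψ (Icc 0 1) (Icc 0 1))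
    (hk_shom : SuperhomogeneousRate kbar ψ) {c : ℝ → 𝒴 → ℝ} {dw : ℝ → ℛ → ℝ}
    (hc : ContinuousOn c (Icc 0 T)) (hc_mem : ∀ t ∈ Icc 0 T, c t ∈ nonnegCone 𝒴)
    (hdw : IntegrableOn dw (Ioo 0 T))
    (hdw_nonneg : ∀ᵐ t ∂(volume.restrict (Ioo 0 T)), ∀ r, 0 ≤ dw t r)
    (hJ : ∫⁻ t in Ioo 0 T, ∑ r, bes (dw t r) (kbar (c t) r) ≠ ⊤)
    {ĉ : 𝒴 → ℝ} (hĉ : ĉ ∈ nonnegCone 𝒴) (hĉ_pos : ∀ r, 0 < kbar ĉ r) :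
    Tendsto (fun δ => ∫⁻ t in Ioo 0 T, ∑ r, bes ((1 - δ) * dw t r)
        (kbar ((1 - δ) • c t + δ • ĉ) r)) (𝓝[>] 0)
      (𝓝 (∫⁻ t in Ioo 0 T, ∑ r, bes (dw t r) (kbar (c t) r))) := by
  have hunit : ∀ᶠ δ in 𝓝[>] (0:ℝ), δ ∈ Icc 0 1 := by
    filter_upwards [Ioo_mem_nhdsGT one_pos] with δ hδ using Ioo_subset_Icc_self hδ
  have hae_Icc : ∀ᵐ t ∂(volume.restrict (Ioo 0 T)), t ∈ Icc 0 T := by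
    filter_upwards [ae_restrict_mem measurableSet_Ioo] with t ht using Ioo_subset_Icc_self ht
  obtain ⟨M, hM⟩ := isCompact_Icc.exists_bound_of_continuousOn (hk_cont.comp
    (hc.add continuousOn_const) fun t ht => fun i => add_nonneg (hc_mem t ht i) (hĉ i))
  refine tendsto_lintegral_sum_bes (M := M) ?_ ?_ hdw hdw_nonneg
    (((hk_cont.comp hc hc_mem).mono Ioo_subset_Icc_self).aemeasurable measurableSet_Ioo) ?_ hJ
    ?_ ?_ ?_
  · simpa using ((tendsto_const_nhds (x := (1:ℝ))).sub tendsto_id).mono_left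
      (nhdsWithin_le_nhds (a := (0:ℝ)) (s := Ioi 0))
  · filter_upwards [hunit] with δ hδ using ⟨sub_nonneg.2 hδ.2, by linarith [hδ.1]⟩
  · filter_upwards [hae_Icc] with t ht using hk_nonneg _ (hc_mem t ht)
  · filter_upwards [hunit] with δ hδ
    exact ((hk_cont.comp (by fun_prop) fun t ht =>
      one_sub_smul_add_smul_mem_nonnegCone (hc_mem t ht) hĉ hδ).mono
        Ioo_subset_Icc_self).aemeasurable measurableSet_Ioo
  · filter_upwards [Ioo_mem_nhdsGT one_pos,
      eventually_le_apply_one_sub hψ_mono hψ_bij (a := 1 / 2) ⟨by norm_num, by norm_num⟩]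
      with δ hδ hψδ
    filter_upwards [hae_Icc] with t ht r
    obtain ⟨hleft, hright⟩ := mul_kbar_le_kbar_one_sub_smul_add_smul hk_mono hk_shom
      (hc_mem t ht) hĉ (Ioo_subset_Icc_self hδ) r
    refine ⟨by nlinarith [hk_nonneg _ (hc_mem t ht) r], ?_, ?_⟩
    · exact (mul_pos (pos_of_strictMonoOn_of_bijOn hψ_mono hψ_bij ⟨hδ.1, hδ.2.le⟩)
        (hĉ_pos r)).trans_le hright
    · exact (kbar_one_sub_smul_add_smul_le hk_mono (hc_mem t ht) hĉ (Ioo_subset_Icc_self hδ)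
        r).trans ((le_abs_self _).trans ((norm_le_pi_norm _ r).trans (hM t ht)))
  · filter_upwards [hae_Icc] with t ht r
    exact tendsto_pi_nhds.1 ((hk_cont _ (hc_mem t ht)).tendsto.comp
      (tendsto_one_sub_smul_add_smul_nhdsWithin_nonnegCone (hc_mem t ht) hĉ)) r

end Rates

theorem stmt9_general
    {𝒴 ℛ : Type*} [Fintype 𝒴] [Fintype ℛ]
    (T : ℝ) (hT : 0 < T)
    (γ : ℛ → 𝒴 → ℝ)
    (kbar : (𝒴 → ℝ) → ℛ → ℝ)
    (hk_nonneg : ∀ c ∈ nonnegCone 𝒴, ∀ r, 0 ≤ kbar c r)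
    -- (iii) C¹ regularity on the nonnegative cone
    (hk_C1 : ContDiffOn ℝ 1 kbar (nonnegCone 𝒴))
    -- (v) monotonicity
    (hk_mono : ∀ c chat : 𝒴 → ℝ, (∀ y, 0 ≤ c y) → (∀ y, c y ≤ chat y) →
      ∀ r, kbar c r ≤ kbar chat r)
    -- (vi) superhomogeneity
    (ψ : ℝ → ℝ) (hψ_mono : StrictMonoOn ψ (Set.Icc 0 1))
    (hψ_bij : Set.BijOn ψ (Set.Icc 0 1) (Set.Icc 0 1))
    (hk_shom : ∀ c ∈ nonnegCone 𝒴, ∀ δ ∈ Set.Icc (0:ℝ) 1, ∀ r,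
      ψ δ * kbar c r ≤ kbar (fun y => δ * c y) r)
    -- each reaction has positive rate somewhere
    (hk_pos : ∀ r : ℛ, ∃ chat ∈ nonnegCone 𝒴, 0 < kbar chat r)
    -- continuous nonnegative initial rate functional
    (I0 : (𝒴 → ℝ) → ℝ)
    (hI0_cont : ContinuousOn I0 (nonnegCone 𝒴))
    -- the given W^{1,1} pair
    (c : ℝ → 𝒴 → ℝ) (w : ℝ → ℛ → ℝ) (dc : ℝ → 𝒴 → ℝ) (dw : ℝ → ℛ → ℝ)
    (hdc_int : IntegrableOn dc (Set.Ioo 0 T))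
    (hdw_int : IntegrableOn dw (Set.Ioo 0 T))
    (hc_AC : ∀ t ∈ Set.Icc (0:ℝ) T, c t = c 0 + ∫ s in (0:ℝ)..t, dc s)
    (hw_AC : ∀ t ∈ Set.Icc (0:ℝ) T, w t = w 0 + ∫ s in (0:ℝ)..t, dw s)
    (hpos : ∀ t ∈ Set.Icc (0:ℝ) T, (∀ y, 0 ≤ c t y) ∧ (∀ r, 0 ≤ w t r))
    (hae : ∀ᵐ t ∂(volume.restrict (Set.Ioo (0:ℝ) T)),
      (∀ r, 0 ≤ dw t r) ∧ dc t = fun y => ∑ r, dw t r * γ r y)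
    (hJ : (∫⁻ t in Set.Ioo (0:ℝ) T, ∑ r, bes (dw t r) (kbar (c t) r)) < ⊤) :
    ∃ (cd : ℝ → ℝ → 𝒴 → ℝ) (wd : ℝ → ℝ → ℛ → ℝ)
      (dcd : ℝ → ℝ → 𝒴 → ℝ) (dwd : ℝ → ℝ → ℛ → ℝ),
      -- each member of the family is an admissible absolutely continuous pair,
      -- with rates bounded away from zero (iii of the conclusion)
      (∀ δ ∈ Set.Ioo (0:ℝ) 1,
        IntegrableOn (dcd δ) (Set.Ioo 0 T) ∧ IntegrableOn (dwd δ) (Set.Ioo 0 T)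
        ∧ (∀ t ∈ Set.Icc (0:ℝ) T, cd δ t = cd δ 0 + ∫ s in (0:ℝ)..t, dcd δ s)
        ∧ (∀ t ∈ Set.Icc (0:ℝ) T, wd δ t = wd δ 0 + ∫ s in (0:ℝ)..t, dwd δ s)
        ∧ (∀ t ∈ Set.Icc (0:ℝ) T, (∀ y, 0 ≤ cd δ t y) ∧ (∀ r, 0 ≤ wd δ t r))
        ∧ (∀ᵐ t ∂(volume.restrict (Set.Ioo (0:ℝ) T)),
            (∀ r, 0 ≤ dwd δ t r) ∧ dcd δ t = fun y => ∑ r, dwd δ t r * γ r y)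
        ∧ ∃ κ > (0:ℝ), ∀ t ∈ Set.Ioo (0:ℝ) T, ∀ r, κ ≤ kbar (cd δ t) r)
      -- (i) convergence of initial values and hybrid convergence
      ∧ Tendsto (fun δ => cd δ 0) (𝓝[>] (0:ℝ)) (𝓝 (c 0))
      ∧ Tendsto (fun δ => ∫ t in Set.Ioo (0:ℝ) T, (‖cd δ t - c t‖ + ‖wd δ t - w t‖))
          (𝓝[>] (0:ℝ)) (𝓝 0)
      ∧ (∀ φ : ℝ → ℛ → ℝ, Continuous φ → HasCompactSupport φ →
          tsupport φ ⊆ Set.Ioo 0 T →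
          Tendsto (fun δ => ∫ t in Set.Ioo (0:ℝ) T, ∑ r, φ t r * dwd δ t r)
            (𝓝[>] (0:ℝ)) (𝓝 (∫ t in Set.Ioo (0:ℝ) T, ∑ r, φ t r * dw t r)))
      ∧ (∀ ξ : ℝ → 𝒴 → ℝ, Continuous ξ → HasCompactSupport ξ →
          tsupport ξ ⊆ Set.Ioo 0 T →
          Tendsto (fun δ => ∫ t in Set.Ioo (0:ℝ) T, ∑ y, ξ t y * dcd δ t y)
            (𝓝[>] (0:ℝ)) (𝓝 (∫ t in Set.Ioo (0:ℝ) T, ∑ y, ξ t y * dc t y)))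
      -- (ii) convergence of the rate functionals
      ∧ Tendsto
          (fun δ => ENNReal.ofReal (I0 (cd δ 0))
            + ∫⁻ t in Set.Ioo (0:ℝ) T, ∑ r, bes (dwd δ t r) (kbar (cd δ t) r))
          (𝓝[>] (0:ℝ))
          (𝓝 (ENNReal.ofReal (I0 (c 0))
            + ∫⁻ t in Set.Ioo (0:ℝ) T, ∑ r, bes (dw t r) (kbar (c t) r))) := by
  obtain ⟨ĉ, hĉ, hĉ_pos⟩ := exists_mem_nonnegCone_forall_pos hk_mono hk_pos
  have hc_mem (t : ℝ) (ht : t ∈ Icc 0 T) : c t ∈ nonnegCone 𝒴 := (hpos t ht).1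
  have hc0 : c 0 ∈ nonnegCone 𝒴 := hc_mem 0 (left_mem_Icc.2 hT.le)
  refine ⟨fun δ t => (1 - δ) • c t + δ • ĉ, fun δ t => (1 - δ) • w t,
    fun δ t => (1 - δ) • dc t, fun δ t => (1 - δ) • dw t, fun δ hδ => ?_,
    (tendsto_one_sub_smul_add_smul _ _).mono_left nhdsWithin_le_nhds,
    (tendsto_integral_norm_one_sub_smul_add_smul_sub _ c w ĉ).mono_left nhdsWithin_le_nhds,
    fun φ _ _ _ => (tendsto_integral_sum_mul_one_sub_smul _ φ dw).mono_left nhdsWithin_le_nhds,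
    fun ξ _ _ _ => (tendsto_integral_sum_mul_one_sub_smul _ ξ dc).mono_left nhdsWithin_le_nhds,
    (ENNReal.tendsto_ofReal ((hI0_cont _ hc0).tendsto.comp
      (tendsto_one_sub_smul_add_smul_nhdsWithin_nonnegCone hc0 hĉ))).add
    (tendsto_lintegral_sum_bes_one_sub_smul_add_smul hk_nonneg hk_C1.continuousOn hk_mono hψ_mono
      hψ_bij hk_shom (continuousOn_Icc_of_eq_add_integral hT.le hdc_int hc_AC) hc_mem hdw_int
      (hae.mono fun t ht => ht.1) hJ.ne hĉ hĉ_pos)⟩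
  have hδ' : δ ∈ Icc (0:ℝ) 1 := Ioo_subset_Icc_self hδ
  obtain ⟨κ, hκ, hκ_le⟩ := exists_pos_forall_le_of_forall_pos fun r =>
    mul_pos (pos_of_strictMonoOn_of_bijOn hψ_mono hψ_bij ⟨hδ.1, hδ.2.le⟩) (hĉ_pos r)
  refine ⟨hdc_int.smul (1 - δ), hdw_int.smul (1 - δ),
    fun t ht => smul_add_eq_add_integral_smul (hc_AC t ht) _ _,
    fun t ht => by simpa using smul_add_eq_add_integral_smul (hw_AC t ht) (1 - δ) 0,
    fun t ht => ⟨one_sub_smul_add_smul_mem_nonnegCone (hc_mem t ht) hĉ hδ',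
      fun r => mul_nonneg (sub_nonneg.2 hδ'.2) ((hpos t ht).2 r)⟩, ?_, κ, hκ,
    fun t ht r => (hκ_le r).trans (mul_kbar_le_kbar_one_sub_smul_add_smul hk_mono hk_shom
      (hc_mem t (Ioo_subset_Icc_self ht)) hĉ hδ' r).2⟩
  filter_upwards [hae] with t ⟨hdw, hdc⟩
  refine ⟨fun r => mul_nonneg (sub_nonneg.2 hδ'.2) (hdw r), ?_⟩
  rw [hdc]
  ext y
  simp only [Pi.smul_apply, smul_eq_mul, Finset.mul_sum, mul_assoc]

/-- Approximation Lemma I: under assumptions (iii)–(vi) on `k̄`,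
assuming each reaction can have positive rate somewhere, and for continuous
`I₀ : ℝ^𝒴₊ → [0,∞)`, every `(c,w) ∈ W^{1,1}` with `ẇ ≥ 0`, `ċ = Γẇ` and
`J(c,w) < ∞` can be approximated by a family `(c_δ,w_δ)` of absolutely continuous
pairs such that `c_δ(0) → c(0)`, `(c_δ,w_δ) → (c,w)` in the hybrid sense,
`I₀(c_δ(0)) + J(c_δ,w_δ) → I₀(c(0)) + J(c,w)`, and for each `δ` the rates
`k̄^r(c_δ(t))` are uniformly bounded away from `0`. -/
theorem stmt9
    {𝒴 ℛ : Type*} [Fintype 𝒴] [Fintype ℛ]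
    (T : ℝ) (hT : 0 < T)
    (γ : ℛ → 𝒴 → ℝ)
    (kbar : (𝒴 → ℝ) → ℛ → ℝ)
    (hk_nonneg : ∀ c ∈ nonnegCone 𝒴, ∀ r, 0 ≤ kbar c r)
    -- (iii) C¹ regularity on the nonnegative cone
    (hk_C1 : ContDiffOn ℝ 1 kbar (nonnegCone 𝒴))
    -- (iv) boundedness of `k̄` and its derivative on fattened stoichiometric simplices
    (hk_bdd : ∀ c ∈ nonnegCone 𝒴, ∀ ε > 0, ∃ M : ℝ,
      ∀ c' ∈ stoichSimplexEps γ c ε,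
        ‖kbar c'‖ ≤ M ∧ ‖fderivWithin ℝ kbar (nonnegCone 𝒴) c'‖ ≤ M)
    -- (v) monotonicity
    (hk_mono : ∀ c chat : 𝒴 → ℝ, (∀ y, 0 ≤ c y) → (∀ y, c y ≤ chat y) →
      ∀ r, kbar c r ≤ kbar chat r)
    -- (vi) superhomogeneity
    (ψ : ℝ → ℝ) (hψ_mono : StrictMonoOn ψ (Set.Icc 0 1))
    (hψ_bij : Set.BijOn ψ (Set.Icc 0 1) (Set.Icc 0 1))
    (hk_shom : ∀ c ∈ nonnegCone 𝒴, ∀ δ ∈ Set.Icc (0:ℝ) 1, ∀ r,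
      ψ δ * kbar c r ≤ kbar (fun y => δ * c y) r)
    -- each reaction has positive rate somewhere
    (hk_pos : ∀ r : ℛ, ∃ chat ∈ nonnegCone 𝒴, 0 < kbar chat r)
    -- continuous nonnegative initial rate functional
    (I0 : (𝒴 → ℝ) → ℝ)
    (hI0_cont : ContinuousOn I0 (nonnegCone 𝒴))
    (hI0_nonneg : ∀ c ∈ nonnegCone 𝒴, 0 ≤ I0 c)
    -- the given W^{1,1} pair
    (c : ℝ → 𝒴 → ℝ) (w : ℝ → ℛ → ℝ) (dc : ℝ → 𝒴 → ℝ) (dw : ℝ → ℛ → ℝ)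
    (hdc_int : IntegrableOn dc (Set.Ioo 0 T))
    (hdw_int : IntegrableOn dw (Set.Ioo 0 T))
    (hc_AC : ∀ t ∈ Set.Icc (0:ℝ) T, c t = c 0 + ∫ s in (0:ℝ)..t, dc s)
    (hw_AC : ∀ t ∈ Set.Icc (0:ℝ) T, w t = w 0 + ∫ s in (0:ℝ)..t, dw s)
    (hpos : ∀ t ∈ Set.Icc (0:ℝ) T, (∀ y, 0 ≤ c t y) ∧ (∀ r, 0 ≤ w t r))
    (hae : ∀ᵐ t ∂(volume.restrict (Set.Ioo (0:ℝ) T)),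
      (∀ r, 0 ≤ dw t r) ∧ dc t = fun y => ∑ r, dw t r * γ r y)
    (hJ : (∫⁻ t in Set.Ioo (0:ℝ) T, ∑ r, bes (dw t r) (kbar (c t) r)) < ⊤) :
    ∃ (cd : ℝ → ℝ → 𝒴 → ℝ) (wd : ℝ → ℝ → ℛ → ℝ)
      (dcd : ℝ → ℝ → 𝒴 → ℝ) (dwd : ℝ → ℝ → ℛ → ℝ),
      -- each member of the family is an admissible absolutely continuous pair,
      -- with rates bounded away from zero (iii of the conclusion)
      (∀ δ ∈ Set.Ioo (0:ℝ) 1,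
        IntegrableOn (dcd δ) (Set.Ioo 0 T) ∧ IntegrableOn (dwd δ) (Set.Ioo 0 T)
        ∧ (∀ t ∈ Set.Icc (0:ℝ) T, cd δ t = cd δ 0 + ∫ s in (0:ℝ)..t, dcd δ s)
        ∧ (∀ t ∈ Set.Icc (0:ℝ) T, wd δ t = wd δ 0 + ∫ s in (0:ℝ)..t, dwd δ s)
        ∧ (∀ t ∈ Set.Icc (0:ℝ) T, (∀ y, 0 ≤ cd δ t y) ∧ (∀ r, 0 ≤ wd δ t r))
        ∧ (∀ᵐ t ∂(volume.restrict (Set.Ioo (0:ℝ) T)),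
            (∀ r, 0 ≤ dwd δ t r) ∧ dcd δ t = fun y => ∑ r, dwd δ t r * γ r y)
        ∧ ∃ κ > (0:ℝ), ∀ t ∈ Set.Ioo (0:ℝ) T, ∀ r, κ ≤ kbar (cd δ t) r)
      -- (i) convergence of initial values and hybrid convergence
      ∧ Tendsto (fun δ => cd δ 0) (𝓝[>] (0:ℝ)) (𝓝 (c 0))
      ∧ Tendsto (fun δ => ∫ t in Set.Ioo (0:ℝ) T, (‖cd δ t - c t‖ + ‖wd δ t - w t‖))
          (𝓝[>] (0:ℝ)) (𝓝 0)
      ∧ (∀ φ : ℝ → ℛ → ℝ, Continuous φ → HasCompactSupport φ →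
          tsupport φ ⊆ Set.Ioo 0 T →
          Tendsto (fun δ => ∫ t in Set.Ioo (0:ℝ) T, ∑ r, φ t r * dwd δ t r)
            (𝓝[>] (0:ℝ)) (𝓝 (∫ t in Set.Ioo (0:ℝ) T, ∑ r, φ t r * dw t r)))
      ∧ (∀ ξ : ℝ → 𝒴 → ℝ, Continuous ξ → HasCompactSupport ξ →
          tsupport ξ ⊆ Set.Ioo 0 T →
          Tendsto (fun δ => ∫ t in Set.Ioo (0:ℝ) T, ∑ y, ξ t y * dcd δ t y)
            (𝓝[>] (0:ℝ)) (𝓝 (∫ t in Set.Ioo (0:ℝ) T, ∑ y, ξ t y * dc t y)))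
      -- (ii) convergence of the rate functionals
      ∧ Tendsto
          (fun δ => ENNReal.ofReal (I0 (cd δ 0))
            + ∫⁻ t in Set.Ioo (0:ℝ) T, ∑ r, bes (dwd δ t r) (kbar (cd δ t) r))
          (𝓝[>] (0:ℝ))
          (𝓝 (ENNReal.ofReal (I0 (c 0))
            + ∫⁻ t in Set.Ioo (0:ℝ) T, ∑ r, bes (dw t r) (kbar (c t) r))) :=
  stmt9_general T hT γ kbar hk_nonneg hk_C1 hk_mono ψ hψ_mono hψ_bij hk_shom hk_pos I0 hI0_cont c w
    dc dw hdc_int hdw_int hc_AC hw_AC hpos hae hJ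
end
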